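/- arXiv:2008.12660 — 3 statements merged into one kernel-verified Lean document; each statement's English description precedes it below -/
import Mathlib

section
/- Let $0<\alpha<n$ and let $\Omega$ be homogeneous of degree zero with $\Omega\in L^{n/(n-\alpha)}(\mathbb{S}^{n-1})$. Then the fractional integral operator $T_{|\Omega|}^{\alpha}f(x)=\int_{\mathbb{R}^n}\frac{|\Omega(x-y)|}{|x-y|^{n-\alpha}}|f(y)|\,dy$ is bounded from $L^1(\mathbb{R}^n)$ to weak $L^{n/(n-\alpha)}(\mathbb{R}^n)$, with operator norm bounded by a constant (depending only on $n,\alpha$) times $\|\Omega\|_{L^{n/(n-\alpha)}(\mathbb{S}^{n-1})}$. -/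
open MeasureTheory Metric Set ENNReal Filter

noncomputable section

abbrev Eucl (n : ℕ) := EuclideanSpace ℝ (Fin n)

/-- `Ω` is homogeneous of degree zero. -/
def Homog (n : ℕ) (Ω : Eucl n → ℝ) : Prop :=
  ∀ r : ℝ, 0 < r → ∀ x : Eucl n, x ≠ 0 → Ω (r • x) = Ω x

/-- Restricted weak `L^q` quasinorm of an `ℝ≥0∞`-valued function on the set `A`. -/
noncomputable def wnormSet {X : Type*} [MeasurableSpace X] (μ : Measure X) (q : ℝ)
    (A : Set X) (g : X → ℝ≥0∞) : ℝ≥0∞ :=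
  ⨆ l : NNReal, (l : ℝ≥0∞) * (μ {x | x ∈ A ∧ (l : ℝ≥0∞) < g x}) ^ (1 / q)

/-- `∫_{S^{n-1}} |Ω|^q dσ`. -/
noncomputable def sphereLpPow (n : ℕ) (q : ℝ) (Ω : Eucl n → ℝ) : ℝ≥0∞ :=
  ∫⁻ x : Metric.sphere (0 : Eucl n) 1, (‖Ω (x : Eucl n)‖₊ : ℝ≥0∞) ^ q
    ∂((volume : Measure (Eucl n)).toSphere)

/-- `‖Ω‖_{L^q(S^{n-1})}`. -/
noncomputable def sphereLpNorm (n : ℕ) (q : ℝ) (Ω : Eucl n → ℝ) : ℝ≥0∞ :=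
  (sphereLpPow n q Ω) ^ (1 / q)

/-- Rough fractional maximal operator. -/
noncomputable def fracMax (n : ℕ) (α : ℝ) (Ω f : Eucl n → ℝ) (x : Eucl n) : ℝ≥0∞ :=
  ⨆ (r : ℝ) (_ : 0 < r), ENNReal.ofReal (r ^ (α - n)) *
    ∫⁻ y in ball x r, (‖Ω (x - y)‖₊ * ‖f y‖₊ : ℝ≥0∞)

/-- Fractional integral with kernel `|Ω|`, applied to `|f|`. -/
noncomputable def fracIntAbs (n : ℕ) (α : ℝ) (Ω f : Eucl n → ℝ) (x : Eucl n) : ℝ≥0∞ :=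
  ∫⁻ y, ((‖Ω (x - y)‖₊ * ‖f y‖₊ : ℝ≥0∞)) / (‖x - y‖₊ : ℝ≥0∞) ^ ((n : ℝ) - α)

/-- Signed fractional integral. -/
noncomputable def fracInt (n : ℕ) (α : ℝ) (Ω f : Eucl n → ℝ) (x : Eucl n) : ℝ :=
  ∫ y, (Ω (x - y) / ‖x - y‖ ^ ((n : ℝ) - α)) * f y

/-- The `L^1`-normalized dilation `f_t(y) = t^{-n} f(y/t)`. -/
noncomputable def dil (n : ℕ) (t : ℝ) (f : Eucl n → ℝ) : Eucl n → ℝ :=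
  fun y => (t ^ n)⁻¹ * f (t⁻¹ • y)

/-- `|a - b|` in `ℝ≥0∞`. -/
noncomputable def ediff (a b : ℝ≥0∞) : ℝ≥0∞ := (a - b) ⊔ (b - a)

/-! The kernel `K z = |Ω z| / |z|^(n-α)` is in weak `L^q`, `q = n/(n-α)`, in the form of the
tail bound `∫_{K > M} K ≤ ‖Ω‖_q^q M^(1-q) / α`: by homogeneity, along the ray through `θ` one
has `K > M` exactly for `r < (|Ω θ|/M)^(1/(n-α))`, and the radial weight `r^(n-1)` turns the
kernel into `|Ω θ| r^(α-1)`. For the weak-type bound split `K ≤ M + K·1_{K>M}` with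
`M = λ/(2‖f‖₁)`: the bounded part contributes at most `λ/2` to `K * |f|`, and Chebyshev's
inequality for the tail part gives `|{K * |f| > λ}| ≤ ‖Ω‖_q^q (2‖f‖₁/λ)^q / α`. -/

section WeakYoung

variable {G : Type*} [MeasurableSpace G] [AddGroup G] [MeasurableAdd₂ G] [MeasurableNeg G]
  {μ : Measure G} [SFinite μ] [μ.IsAddRightInvariant] {K F : G → ℝ≥0∞}

lemma lintegral_lintegral_sub_mul (hK : Measurable K) (hF : Measurable F) :
    ∫⁻ x, ∫⁻ y, K (x - y) * F y ∂μ ∂μ = (∫⁻ z, K z ∂μ) * ∫⁻ y, F y ∂μ := by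
  rw [lintegral_lintegral_swap
    ((hK.comp (measurable_fst.sub measurable_snd)).mul (hF.comp measurable_snd)).aemeasurable]
  calc ∫⁻ y, ∫⁻ x, K (x - y) * F y ∂μ ∂μ = ∫⁻ y, (∫⁻ x, K (x - y) ∂μ) * F y ∂μ :=
        lintegral_congr fun y =>
          lintegral_mul_const _ (hK.comp (measurable_id.sub measurable_const))
    _ = ∫⁻ y, (∫⁻ z, K z ∂μ) * F y ∂μ := by simp_rw [lintegral_sub_right_eq_self K]
    _ = (∫⁻ z, K z ∂μ) * ∫⁻ y, F y ∂μ := lintegral_const_mul _ hF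

lemma meas_lt_lintegral_sub_mul_le (hK : Measurable K) (hF : Measurable F) {q : ℝ}
    {D M : ℝ≥0∞} (hM0 : M ≠ 0) (hMt : M ≠ ⊤)
    (htail : ∫⁻ z in {z | M < K z}, K z ∂μ ≤ D * M ^ (1 - q))
    (hN0 : ∫⁻ y, F y ∂μ ≠ 0) (hNt : ∫⁻ y, F y ∂μ ≠ ⊤) :
    μ {x | 2 * M * ∫⁻ y, F y ∂μ < ∫⁻ y, K (x - y) * F y ∂μ} ≤ D * M ^ (-q) := by
  set N := ∫⁻ y, F y ∂μ
  set KM := {z | M < K z}.indicator K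
  have hKM : Measurable KM := hK.indicator (measurableSet_lt measurable_const hK)
  have hMN0 : M * N ≠ 0 := mul_ne_zero hM0 hN0
  have hMNt : M * N ≠ ⊤ := ENNReal.mul_ne_top hMt hNt
  have hsplit (x : G) : ∫⁻ y, K (x - y) * F y ∂μ ≤ M * N + ∫⁻ y, KM (x - y) * F y ∂μ := by
    have hle (w : G) : K w ≤ M + KM w := by
      by_cases hw : M < K w
      · exact (indicator_of_mem (s := {z | M < K z}) hw K).symm.trans_le le_add_self
      · exact (not_lt.1 hw).trans le_self_add
    calc ∫⁻ y, K (x - y) * F y ∂μ ≤ ∫⁻ y, (M * F y + KM (x - y) * F y) ∂μ :=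
          lintegral_mono fun y => (mul_le_mul_left (hle _) _).trans_eq (add_mul _ _ _)
      _ = M * N + ∫⁻ y, KM (x - y) * F y ∂μ := by
          rw [lintegral_add_left (hF.const_mul M), lintegral_const_mul M hF]
  have hsub : {x | 2 * M * N < ∫⁻ y, K (x - y) * F y ∂μ}
      ⊆ {x | M * N ≤ ∫⁻ y, KM (x - y) * F y ∂μ} := by
    intro x hx
    by_contra hlt
    have := (hsplit x).trans_lt (ENNReal.add_lt_add_left hMNt (not_le.1 hlt))
    rw [← two_mul, ← mul_assoc] at this
    exact lt_asymm hx this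
  have hconv : Measurable fun x => ∫⁻ y, KM (x - y) * F y ∂μ :=
    Measurable.lintegral_prod_right'
      ((hKM.comp (measurable_fst.sub measurable_snd)).mul (hF.comp measurable_snd))
  calc μ {x | 2 * M * N < ∫⁻ y, K (x - y) * F y ∂μ}
      ≤ μ {x | M * N ≤ ∫⁻ y, KM (x - y) * F y ∂μ} := measure_mono hsub
    _ ≤ (∫⁻ x, ∫⁻ y, KM (x - y) * F y ∂μ ∂μ) / (M * N) :=
        meas_ge_le_lintegral_div hconv.aemeasurable hMN0 hMNt
    _ = (∫⁻ z in {z | M < K z}, K z ∂μ) * N / (M * N) := by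
        rw [lintegral_lintegral_sub_mul hKM hF,
          lintegral_indicator (measurableSet_lt measurable_const hK)]
    _ ≤ D * M ^ (1 - q) * N / (M * N) := by gcongr
    _ = D * M ^ (-q) := by
        rw [ENNReal.mul_div_mul_right _ _ hN0 hNt, mul_div_assoc,
          show -q = 1 - q - 1 by ring, ENNReal.rpow_sub (1 - q) 1 hM0 hMt, ENNReal.rpow_one]

theorem wnormSet_lintegral_sub_mul_le (hK : Measurable K) (hF : Measurable F) {q : ℝ}
    (hq : 0 < q) {D : ℝ≥0∞}
    (htail : ∀ M : ℝ≥0∞, M ≠ 0 → M ≠ ⊤ → ∫⁻ z in {z | M < K z}, K z ∂μ ≤ D * M ^ (1 - q))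
    (hNt : ∫⁻ y, F y ∂μ ≠ ⊤) :
    wnormSet μ q univ (fun x => ∫⁻ y, K (x - y) * F y ∂μ) ≤ 2 * D ^ (1 / q) * ∫⁻ y, F y ∂μ := by
  set N := ∫⁻ y, F y ∂μ
  refine iSup_le fun l => ?_
  simp only [mem_univ, true_and]
  rcases eq_or_ne N 0 with hN0 | hN0
  · have hF0 : F =ᵐ[μ] 0 := (lintegral_eq_zero_iff hF).1 hN0
    have hconv (x : G) : ∫⁻ y, K (x - y) * F y ∂μ = 0 :=
      lintegral_eq_zero_of_ae_eq_zero (by filter_upwards [hF0] with y hy; simp [hy])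
    simp [hconv, ENNReal.zero_rpow_of_pos (inv_pos.2 hq)]
  rcases eq_or_ne (l : ℝ≥0∞) 0 with hl0 | hl0
  · simp [hl0]
  set M := (l : ℝ≥0∞) / (2 * N)
  have h2N0 : 2 * N ≠ 0 := mul_ne_zero two_ne_zero hN0
  have h2Nt : 2 * N ≠ ⊤ := ENNReal.mul_ne_top ENNReal.ofNat_ne_top hNt
  have hM0 : M ≠ 0 := ENNReal.div_ne_zero.2 ⟨hl0, h2Nt⟩
  have hMt : M ≠ ⊤ := ENNReal.div_ne_top ENNReal.coe_ne_top h2N0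
  have hl : (l : ℝ≥0∞) = 2 * M * N := by
    rw [mul_comm 2, mul_assoc, ENNReal.div_mul_cancel h2N0 h2Nt]
  rw [hl]
  calc 2 * M * N * μ {x | 2 * M * N < ∫⁻ y, K (x - y) * F y ∂μ} ^ (1 / q)
      ≤ 2 * M * N * (D * M ^ (-q)) ^ (1 / q) := by
        gcongr
        exact meas_lt_lintegral_sub_mul_le hK hF hM0 hMt (htail M hM0 hMt) hN0 hNt
    _ = 2 * D ^ (1 / q) * N * (M * M⁻¹) := by
        rw [ENNReal.mul_rpow_of_nonneg _ _ (one_div_pos.2 hq).le, ← ENNReal.rpow_mul,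
          neg_mul, mul_one_div_cancel hq.ne', ENNReal.rpow_neg_one]
        ring
    _ = 2 * D ^ (1 / q) * N := by rw [ENNReal.mul_inv_cancel hM0 hMt, mul_one]

end WeakYoung

lemma lintegral_volumeIoiPow (m : ℕ) (g : ℝ → ℝ≥0∞) :
    ∫⁻ r, g r ∂(Measure.volumeIoiPow m) = ∫⁻ r in Ioi (0:ℝ), ENNReal.ofReal (r ^ m) * g r := by
  rw [Measure.volumeIoiPow, lintegral_withDensity_eq_lintegral_mul_non_measurable _
      (measurable_subtype_coe.pow_const m).ennreal_ofReal
      (.of_forall fun _ => ENNReal.ofReal_lt_top)]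
  exact lintegral_subtype_comap measurableSet_Ioi (fun r => ENNReal.ofReal (r ^ m) * g r)

theorem lintegral_eq_lintegral_toSphere_lintegral_Ioi {E : Type*} [NormedAddCommGroup E]
    [NormedSpace ℝ E] [MeasurableSpace E] [BorelSpace E] [FiniteDimensional ℝ E] [Nontrivial E]
    (μ : Measure E) [μ.IsAddHaarMeasure] {g : E → ℝ≥0∞} (hg : Measurable g) :
    ∫⁻ x, g x ∂μ = ∫⁻ θ : sphere (0 : E) 1, (∫⁻ r in Ioi (0:ℝ),
      ENNReal.ofReal (r ^ (Module.finrank ℝ E - 1)) * g (r • (θ : E))) ∂μ.toSphere := by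
  have hpolar : Measurable fun p : sphere (0 : E) 1 × Ioi (0:ℝ) => g ((p.2 : ℝ) • (p.1 : E)) :=
    hg.comp (by fun_prop)
  calc ∫⁻ x, g x ∂μ = ∫⁻ x : ({0}ᶜ : Set E), g x ∂(μ.comap (↑)) := by
        rw [lintegral_subtype_comap (measurableSet_singleton _).compl, restrict_compl_singleton]
    _ = ∫⁻ p, g ((p.2 : ℝ) • (p.1 : E))
          ∂(μ.toSphere.prod (.volumeIoiPow (Module.finrank ℝ E - 1))) := by
        rw [← μ.measurePreserving_homeomorphUnitSphereProd.lintegral_comp_emb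
          (Homeomorph.measurableEmbedding _)]
        refine lintegral_congr fun x => ?_
        simp [smul_inv_smul₀ (norm_ne_zero_iff.2 x.2)]
    _ = _ := by
        rw [lintegral_prod _ hpolar.aemeasurable]
        exact lintegral_congr fun θ => lintegral_volumeIoiPow _ fun r => g (r • (θ : E))

lemma setLIntegral_Ioo_rpow_sub_one {β : ℝ} (hβ : 0 < β) {ρ : ℝ} (hρ : 0 ≤ ρ) :
    ∫⁻ r in Ioo (0:ℝ) ρ, ENNReal.ofReal (r ^ (β - 1)) = ENNReal.ofReal (ρ ^ β / β) := by
  have hint : IntegrableOn (fun r : ℝ => r ^ (β - 1)) (Ioo 0 ρ) :=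
    (intervalIntegral.intervalIntegrable_rpow' (by linarith)).1.mono_set Ioo_subset_Ioc_self
  rw [← ofReal_integral_eq_lintegral_ofReal hint
    (ae_restrict_of_forall_mem measurableSet_Ioo fun r hr => Real.rpow_nonneg hr.1.le _),
    ← integral_Ioc_eq_integral_Ioo, ← intervalIntegral.integral_of_le hρ,
    integral_rpow (Or.inl (by linarith)), sub_add_cancel, Real.zero_rpow hβ.ne', sub_zero]

lemma setLIntegral_Ioi_indicator_lt_rpow_le {n : ℕ} {α : ℝ} (hα : 0 < α) (hαn : α < n)
    {A M : ℝ} (hA : 0 ≤ A) (hM : 0 < M) :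
    ∫⁻ r in Ioi (0:ℝ), ENNReal.ofReal (r ^ (n - 1)) *
        {r | M < A * r ^ (α - n)}.indicator (fun r => ENNReal.ofReal (A * r ^ (α - n))) r
      ≤ ENNReal.ofReal (A ^ (n / (n - α)) * M ^ (1 - n / (n - α)) / α) := by
  have hnα : 0 < (n : ℝ) - α := by linarith
  set ρ := (A / M) ^ ((n : ℝ) - α)⁻¹
  have hρ : 0 ≤ ρ := Real.rpow_nonneg (div_nonneg hA hM.le) _
  have hlt {r : ℝ} (hr : 0 < r) (h : M < A * r ^ (α - n)) : r < ρ := by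
    rw [Real.lt_rpow_inv_iff_of_pos hr.le (div_nonneg hA hM.le) hnα, lt_div_iff₀ hM]
    rwa [← neg_sub, Real.rpow_neg hr.le, ← div_eq_mul_inv, lt_div_iff₀ (by positivity),
      mul_comm] at h
  have hpow {r : ℝ} (hr : 0 < r) : r ^ (n - 1) * (A * r ^ (α - n)) = A * r ^ (α - 1) := by
    rw [mul_left_comm, ← Real.rpow_natCast, Nat.cast_sub (by exact_mod_cast (hα.trans hαn)),
      ← Real.rpow_add hr, Nat.cast_one]
    ring_nf
  calc ∫⁻ r in Ioi (0:ℝ), ENNReal.ofReal (r ^ (n - 1)) *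
        {r | M < A * r ^ (α - n)}.indicator (fun r => ENNReal.ofReal (A * r ^ (α - n))) r
      ≤ ∫⁻ r in Ioi (0:ℝ), (Iio ρ).indicator (fun r => ENNReal.ofReal (A * r ^ (α - 1))) r := by
        refine setLIntegral_mono' measurableSet_Ioi fun r (hr : 0 < r) => ?_
        by_cases h : M < A * r ^ (α - n)
        · rw [indicator_of_mem (show r ∈ {r | M < A * r ^ (α - n)} from h),
            indicator_of_mem (show r ∈ Iio ρ from hlt hr h), ← ENNReal.ofReal_mul (by positivity),
            hpow hr]
        · rw [indicator_of_notMem (show r ∉ {r | M < A * r ^ (α - n)} from h), mul_zero]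
          exact zero_le
    _ = ∫⁻ r in Ioo 0 ρ, ENNReal.ofReal A * ENNReal.ofReal (r ^ (α - 1)) := by
        rw [lintegral_indicator measurableSet_Iio, Measure.restrict_restrict measurableSet_Iio,
          Iio_inter_Ioi]
        simp_rw [ENNReal.ofReal_mul hA]
    _ = ENNReal.ofReal (A * (A / M) ^ (α / (n - α)) / α) := by
        rw [lintegral_const_mul' _ _ ENNReal.ofReal_ne_top, setLIntegral_Ioo_rpow_sub_one hα hρ,
          ← ENNReal.ofReal_mul hA, ← Real.rpow_mul (div_nonneg hA hM.le), mul_div_assoc,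
          inv_mul_eq_div, div_eq_mul_inv]
    _ = ENNReal.ofReal (A ^ (n / (n - α)) * M ^ (1 - n / (n - α)) / α) := by
        have hq : (n : ℝ) / (n - α) = 1 + α / (n - α) := by field_simp; ring
        rw [hq, Real.div_rpow hA hM.le, Real.rpow_add' hA (by positivity), Real.rpow_one,
          sub_add_cancel_left, Real.rpow_neg hM.le, div_eq_mul_inv (A ^ _), mul_assoc]

def roughKernel (n : ℕ) (α : ℝ) (Ω : Eucl n → ℝ) (z : Eucl n) : ℝ≥0∞ :=
  (‖Ω z‖₊ : ℝ≥0∞) / (‖z‖₊ : ℝ≥0∞) ^ ((n : ℝ) - α)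

section RoughKernel

variable {n : ℕ} {α : ℝ} {Ω : Eucl n → ℝ}

lemma measurable_roughKernel (hΩ : Measurable Ω) : Measurable (roughKernel n α Ω) :=
  hΩ.nnnorm.coe_nnreal_ennreal.div (measurable_nnnorm.coe_nnreal_ennreal.pow_const _)

lemma roughKernel_smul (hΩ : Homog n Ω) {θ : Eucl n} (hθ : ‖θ‖ = 1) {r : ℝ} (hr : 0 < r) :
    roughKernel n α Ω (r • θ) = ENNReal.ofReal (‖Ω θ‖ * r ^ (α - n)) := by
  have hθ0 : θ ≠ 0 := norm_ne_zero_iff.1 (by rw [hθ]; exact one_ne_zero)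
  have hrθ : (‖r • θ‖₊ : ℝ≥0∞) = ENNReal.ofReal r := by
    rw [← enorm_eq_nnnorm, ← ofReal_norm, norm_smul, hθ, mul_one, Real.norm_of_nonneg hr.le]
  rw [roughKernel, hΩ r hr θ hθ0, hrθ, show α - n = -(n - α) by ring, Real.rpow_neg hr.le,
    ← div_eq_mul_inv, ENNReal.ofReal_div_of_pos (by positivity), ← ENNReal.ofReal_rpow_of_pos hr,
    ofReal_norm, enorm_eq_nnnorm]

theorem setLIntegral_lt_roughKernel_le (hα : 0 < α) (hαn : α < n) (hΩm : Measurable Ω)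
    (hΩh : Homog n Ω) {M : ℝ≥0∞} (hM0 : M ≠ 0) (hMt : M ≠ ⊤) :
    ∫⁻ z in {z | M < roughKernel n α Ω z}, roughKernel n α Ω z
      ≤ sphereLpPow n (n / (n - α)) Ω * (ENNReal.ofReal α)⁻¹ * M ^ (1 - n / (n - α)) := by
  have : Nontrivial (Eucl n) :=
    Module.nontrivial_of_finrank_pos (R := ℝ)
      (by simpa using (Nat.cast_pos.1 (hα.trans hαn) : 0 < n))
  have hK : Measurable (roughKernel n α Ω) := measurable_roughKernel hΩm
  have hS : MeasurableSet {z | M < roughKernel n α Ω z} := measurableSet_lt measurable_const hK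
  obtain ⟨m, hm, rfl⟩ : ∃ m : ℝ, 0 < m ∧ ENNReal.ofReal m = M :=
    ⟨M.toReal, ENNReal.toReal_pos hM0 hMt, ENNReal.ofReal_toReal hMt⟩
  have hray (θ : sphere (0 : Eucl n) 1) :
      ∫⁻ r in Ioi (0:ℝ), ENNReal.ofReal (r ^ (n - 1)) *
          {z | ENNReal.ofReal m < roughKernel n α Ω z}.indicator (roughKernel n α Ω) (r • θ)
        ≤ (‖Ω θ‖₊ : ℝ≥0∞) ^ (n / (n - α)) *
          ((ENNReal.ofReal α)⁻¹ * ENNReal.ofReal m ^ (1 - n / (n - α))) := by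
    have hθ : ‖(θ : Eucl n)‖ = 1 := mem_sphere_zero_iff_norm.1 θ.2
    calc _ = ∫⁻ r in Ioi (0:ℝ), ENNReal.ofReal (r ^ (n - 1)) *
          {r | m < ‖Ω θ‖ * r ^ (α - n)}.indicator
            (fun r => ENNReal.ofReal (‖Ω θ‖ * r ^ (α - n))) r := by
          refine setLIntegral_congr_fun measurableSet_Ioi fun r (hr : 0 < r) => ?_
          simp only [indicator, mem_ofPred_eq, roughKernel_smul hΩh hθ hr,
            ENNReal.ofReal_lt_ofReal_iff_of_nonneg hm.le]
      _ ≤ ENNReal.ofReal (‖Ω θ‖ ^ (n / (n - α)) * m ^ (1 - n / (n - α)) / α) :=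
          setLIntegral_Ioi_indicator_lt_rpow_le hα hαn (norm_nonneg _) hm
      _ = _ := by
          rw [ENNReal.ofReal_div_of_pos hα, ENNReal.ofReal_mul (by positivity),
            ← ENNReal.ofReal_rpow_of_nonneg (norm_nonneg _)
              (div_pos (hα.trans hαn) (sub_pos.2 hαn)).le,
            ← ENNReal.ofReal_rpow_of_pos hm, ofReal_norm, enorm_eq_nnnorm, div_eq_mul_inv]
          ring
  calc ∫⁻ z in {z | ENNReal.ofReal m < roughKernel n α Ω z}, roughKernel n α Ω z
      = ∫⁻ θ : sphere (0 : Eucl n) 1, (∫⁻ r in Ioi (0:ℝ), ENNReal.ofReal (r ^ (n - 1)) *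
          {z | ENNReal.ofReal m < roughKernel n α Ω z}.indicator (roughKernel n α Ω) (r • θ))
          ∂(volume : Measure (Eucl n)).toSphere := by
        rw [← lintegral_indicator hS,
          lintegral_eq_lintegral_toSphere_lintegral_Ioi _ (hK.indicator hS),
          finrank_euclideanSpace_fin]
    _ ≤ ∫⁻ θ : sphere (0 : Eucl n) 1, (‖Ω θ‖₊ : ℝ≥0∞) ^ (n / (n - α)) *
          ((ENNReal.ofReal α)⁻¹ * ENNReal.ofReal m ^ (1 - n / (n - α)))
          ∂(volume : Measure (Eucl n)).toSphere := lintegral_mono hray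
    _ = _ := by
        rw [lintegral_mul_const (f := fun θ : sphere (0 : Eucl n) 1 => (‖Ω θ‖₊ : ℝ≥0∞) ^ _) _
          ((hΩm.comp measurable_subtype_coe).nnnorm.coe_nnreal_ennreal.pow_const _),
          sphereLpPow, mul_assoc]

end RoughKernel

theorem stmt2 (n : ℕ) (α : ℝ) (hα : 0 < α) (hαn : α < n) :
    ∃ C : ℝ≥0∞, 0 < C ∧ C < ⊤ ∧
      ∀ (Ω f : Eucl n → ℝ), Measurable Ω → Homog n Ω →
        sphereLpPow n ((n:ℝ)/((n:ℝ)-α)) Ω < ⊤ → Integrable f →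
        wnormSet volume ((n:ℝ)/((n:ℝ)-α)) Set.univ (fracIntAbs n α Ω f)
          ≤ C * sphereLpNorm n ((n:ℝ)/((n:ℝ)-α)) Ω * eLpNorm f 1 volume := by
  set q : ℝ := (n:ℝ)/((n:ℝ)-α)
  have hq : 0 < q := div_pos (hα.trans hαn) (sub_pos.2 hαn)
  have hα' : (ENNReal.ofReal α)⁻¹ ≠ ⊤ := ENNReal.inv_ne_top.2 (ENNReal.ofReal_pos.2 hα).ne'
  refine ⟨2 * (ENNReal.ofReal α)⁻¹ ^ (1 / q), ?_, ?_, fun Ω f hΩm hΩh _ hf => ?_⟩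
  · exact ENNReal.mul_pos two_ne_zero
      (ENNReal.rpow_pos (ENNReal.inv_pos.2 ENNReal.ofReal_ne_top) hα').ne'
  · exact ENNReal.mul_lt_top ENNReal.ofNat_lt_top
      (ENNReal.rpow_lt_top_of_nonneg (one_div_pos.2 hq).le hα')
  set F := hf.aemeasurable.enorm.mk
  have hfF : (fun y => ‖f y‖ₑ) =ᵐ[volume] F := hf.aemeasurable.enorm.ae_eq_mk
  have hconv : fracIntAbs n α Ω f = fun x => ∫⁻ y, roughKernel n α Ω (x - y) * F y :=
    funext fun x => lintegral_congr_ae <| by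
      filter_upwards [hfF] with y hy
      rw [← hy, roughKernel, div_eq_mul_inv, div_eq_mul_inv, mul_right_comm, enorm_eq_nnnorm]
  have hN : ∫⁻ y, F y = eLpNorm f 1 volume := by
    rw [eLpNorm_one_eq_lintegral_enorm]
    exact lintegral_congr_ae hfF.symm
  calc wnormSet volume q univ (fracIntAbs n α Ω f)
      ≤ 2 * (sphereLpPow n q Ω * (ENNReal.ofReal α)⁻¹) ^ (1 / q) * ∫⁻ y, F y := by
        rw [hconv]
        exact wnormSet_lintegral_sub_mul_le (measurable_roughKernel hΩm)
          hf.aemeasurable.enorm.measurable_mk hq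
          (fun M hM0 hMt => setLIntegral_lt_roughKernel_le hα hαn hΩm hΩh hM0 hMt)
          (hN ▸ (memLp_one_iff_integrable.2 hf).eLpNorm_ne_top)
    _ = 2 * (ENNReal.ofReal α)⁻¹ ^ (1 / q) * sphereLpNorm n q Ω * eLpNorm f 1 volume := by
        rw [ENNReal.mul_rpow_of_nonneg _ _ (one_div_pos.2 hq).le, hN, sphereLpNorm]
        ring
end
end

section
/- Let $0<\alpha<n$, let $\Omega$ be homogeneous of degree zero, bounded and Lipschitz on $\mathbb{S}^{n-1}$, and let $f$ be a nonnegative integrable function supported in $B(0,1)$ with $\|f\|_{L^1}=1$; set $f_t(y)=t^{-n}f(y/t)$. Then for every $\rho>0$, $\lim_{t\to 0^+}\Big\|T_{\Omega}^{\alpha}f_t(\cdot)-\frac{\Omega(\cdot)}{|\cdot|^{n-\alpha}}\Big\|_{L^{n/(n-\alpha),\infty}(\mathbb{R}^n\setminus B(0,\rho))}=0$. -/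
open MeasureTheory Metric Set ENNReal Filter

noncomputable section

/-!
Since `f_t` is a probability density supported in `B(0, t)`, the error
`T f_t(x) - K(x)` is the average of `K(x - y) - K(x)` against `f_t`, where `K = Ω / |·|^{n-α}`.
For `|x| ≥ ρ ≥ 2t`, homogeneity and the Lipschitz bound on the sphere control the angular part
of this difference, and the mean value theorem for `r ↦ r^{α-n}` the radial part, giving
`|T f_t(x) - K(x)| ≤ C t |x|^{α-n} / ρ`. The superlevel sets of `|x|^{α-n}` are balls, so its
weak `L^{n/(n-α)}` quasinorm is finite, and the error has quasinorm `O(t)`.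
-/

lemma abs_rpow_sub_rpow_le {β m r s : ℝ} (hβ : β ≤ 1) (hm : 0 < m) (hr : m ≤ r) (hs : m ≤ s) :
    |r ^ β - s ^ β| ≤ |β| * m ^ (β - 1) * |r - s| := by
  have hderiv : ∀ x ∈ Ici m, HasDerivWithinAt (· ^ β) (β * x ^ (β - 1)) (Ici m) x := fun x hx =>
    (Real.hasDerivAt_rpow_const (Or.inl (hm.trans_le hx).ne')).hasDerivWithinAt
  have hbound : ∀ x ∈ Ici m, ‖β * x ^ (β - 1)‖ ≤ |β| * m ^ (β - 1) := fun x hx => by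
    rw [Real.norm_eq_abs, abs_mul, abs_of_pos (Real.rpow_pos_of_pos (hm.trans_le hx) _)]
    exact mul_le_mul_of_nonneg_left (Real.rpow_le_rpow_of_nonpos hm hx (by linarith))
      (abs_nonneg β)
  exact (convex_Ici m).norm_image_sub_le_of_norm_hasDerivWithin_le hderiv hbound hs hr

lemma norm_inv_norm_smul_sub_le {E : Type*} [NormedAddCommGroup E] [NormedSpace ℝ E] {a b : E}
    (ha : a ≠ 0) : ‖‖a‖⁻¹ • a - ‖b‖⁻¹ • b‖ ≤ 2 * ‖a - b‖ / ‖a‖ := by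
  have hsplit :
      ‖a‖⁻¹ • a - ‖b‖⁻¹ • b = ‖a‖⁻¹ • (a - b) + (‖a‖⁻¹ * (‖b‖ - ‖a‖)) • (‖b‖⁻¹ • b) := by
    rcases eq_or_ne b 0 with rfl | hb
    · simp
    rw [smul_smul, show ‖a‖⁻¹ * (‖b‖ - ‖a‖) * ‖b‖⁻¹ = ‖a‖⁻¹ - ‖b‖⁻¹ by field_simp, smul_sub,
      sub_smul]
    abel
  have hunit : ‖‖b‖⁻¹ • b‖ ≤ 1 := by
    rw [norm_smul, norm_inv, norm_norm]
    exact inv_mul_le_one_of_le₀ le_rfl (norm_nonneg b)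
  calc ‖‖a‖⁻¹ • a - ‖b‖⁻¹ • b‖
      ≤ ‖a‖⁻¹ * ‖a - b‖ + ‖a‖⁻¹ * |‖b‖ - ‖a‖| * ‖‖b‖⁻¹ • b‖ := by
        rw [hsplit]
        refine (norm_add_le _ _).trans_eq ?_
        rw [norm_smul, norm_smul, norm_mul, norm_inv, norm_norm, Real.norm_eq_abs]
    _ ≤ ‖a‖⁻¹ * ‖a - b‖ + ‖a‖⁻¹ * ‖a - b‖ * 1 := by
        gcongr
        rw [norm_sub_rev a b]
        exact abs_norm_sub_norm_le b a
    _ = 2 * ‖a - b‖ / ‖a‖ := by ring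

lemma abs_integral_mul_sub_le {X : Type*} [MeasurableSpace X] {μ : Measure X} {φ h : X → ℝ}
    {s : Set X} {c M : ℝ} (hφ : Integrable φ μ) (hφ0 : ∀ y, 0 ≤ φ y) (hφ1 : ∫ y, φ y ∂μ = 1)
    (hsupp : Function.support φ ⊆ s) (hh : AEStronglyMeasurable h μ)
    (hM : ∀ y ∈ s, |h y - c| ≤ M) :
    |∫ y, h y * φ y ∂μ - c| ≤ M := by
  have hbound : ∀ y, ‖(h y - c) * φ y‖ ≤ M * φ y := fun y => by
    by_cases hy : y ∈ s
    · rw [Real.norm_eq_abs, abs_mul, abs_of_nonneg (hφ0 y)]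
      exact mul_le_mul_of_nonneg_right (hM y hy) (hφ0 y)
    · simp [Function.notMem_support.1 fun h => hy (hsupp h)]
  have hint : Integrable (fun y => (h y - c) * φ y) μ :=
    (hφ.const_mul M).mono' ((hh.sub aestronglyMeasurable_const).mul hφ.1) (ae_of_all _ hbound)
  have hsplit : ∫ y, h y * φ y ∂μ = ∫ y, (h y - c) * φ y ∂μ + c := by
    simp_rw [show ∀ y, h y * φ y = (h y - c) * φ y + c * φ y from fun y => by ring]
    rw [integral_add hint (hφ.const_mul c), integral_const_mul, hφ1, mul_one]
  calc |∫ y, h y * φ y ∂μ - c| = ‖∫ y, (h y - c) * φ y ∂μ‖ := by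
        rw [hsplit, add_sub_cancel_right, Real.norm_eq_abs]
    _ ≤ ∫ y, M * φ y ∂μ := norm_integral_le_of_norm_le (hφ.const_mul M) (ae_of_all _ hbound)
    _ = M := by rw [integral_const_mul, hφ1, mul_one]

lemma lt_rpow_inv_of_lt_mul_rpow_neg {a l C γ : ℝ} (ha : 0 ≤ a) (hl : 0 < l) (hγ : 0 < γ)
    (hlt : l < C * a ^ (-γ)) : a < (C / l) ^ γ⁻¹ := by
  rcases ha.eq_or_lt with rfl | ha
  · rw [Real.zero_rpow (neg_ne_zero.2 hγ.ne'), mul_zero] at hlt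
    exact absurd hlt (not_lt.2 hl.le)
  have haγ : 0 < a ^ γ := Real.rpow_pos_of_pos ha γ
  rw [Real.rpow_neg ha.le, ← div_eq_mul_inv, lt_div_iff₀ haγ, ← lt_div_iff₀' hl] at hlt
  calc a = (a ^ γ) ^ γ⁻¹ := (Real.rpow_rpow_inv ha.le hγ.ne').symm
    _ < (C / l) ^ γ⁻¹ := Real.rpow_lt_rpow haγ.le hlt (inv_pos.2 hγ)

lemma wnormSet_le_of_le_mul_rpow_norm {E : Type*} [NormedAddCommGroup E] [NormedSpace ℝ E]
    [FiniteDimensional ℝ E] [Nontrivial E] [MeasurableSpace E] [BorelSpace E]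
    (μ : Measure E) [μ.IsAddHaarMeasure] {α C : ℝ} (hα : α < Module.finrank ℝ E) (hC : 0 ≤ C)
    {A : Set E} {g : E → ℝ≥0∞}
    (hg : ∀ x ∈ A, g x ≤ ENNReal.ofReal (C * ‖x‖ ^ (α - Module.finrank ℝ E))) :
    wnormSet μ (Module.finrank ℝ E / (Module.finrank ℝ E - α)) A g ≤
      ENNReal.ofReal C * μ (ball 0 1) ^ ((Module.finrank ℝ E - α) / Module.finrank ℝ E) := by
  set d : ℝ := (Module.finrank ℝ E : ℝ)
  have hd : 0 < d := Nat.cast_pos.2 Module.finrank_pos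
  have hγ : 0 < d - α := sub_pos.2 hα
  have he : 0 ≤ (d - α) / d := (div_pos hγ hd).le
  refine iSup_le fun l => ?_
  rcases eq_or_ne l 0 with rfl | hl
  · simp
  have hl' : (0 : ℝ) < l := NNReal.coe_pos.2 (pos_iff_ne_zero.2 hl)
  set r := (C / l) ^ (d - α)⁻¹
  have hr : 0 ≤ r := Real.rpow_nonneg (div_nonneg hC hl'.le) _
  have hsub : {x | x ∈ A ∧ (l : ℝ≥0∞) < g x} ⊆ ball 0 r := by
    rintro x ⟨hxA, hlx⟩
    rw [mem_ball_zero_iff]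
    refine lt_rpow_inv_of_lt_mul_rpow_neg (norm_nonneg x) hl' hγ ?_
    have := hlx.trans_le (hg x hxA)
    rwa [← ENNReal.ofReal_coe_nnreal, ENNReal.ofReal_lt_ofReal_iff_of_nonneg l.coe_nonneg,
      ← neg_sub] at this
  have hrpow : (r ^ Module.finrank ℝ E) ^ ((d - α) / d) = C / l := by
    rw [← Real.rpow_natCast, ← Real.rpow_mul hr, mul_div_cancel₀ _ hd.ne',
      Real.rpow_inv_rpow (div_nonneg hC hl'.le) hγ.ne']
  calc (l : ℝ≥0∞) * μ {x | x ∈ A ∧ (l : ℝ≥0∞) < g x} ^ (1 / (d / (d - α)))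
      ≤ l * μ (ball 0 r) ^ ((d - α) / d) := by
        rw [one_div_div]
        gcongr
    _ = l * ENNReal.ofReal (C / l) * μ (ball 0 1) ^ ((d - α) / d) := by
        rw [μ.addHaar_ball 0 hr, ENNReal.mul_rpow_of_nonneg _ _ he,
          ENNReal.ofReal_rpow_of_nonneg (pow_nonneg hr _) he, hrpow, mul_assoc]
    _ = ENNReal.ofReal C * μ (ball 0 1) ^ ((d - α) / d) := by
        rw [ENNReal.ofReal_div_of_pos hl', ENNReal.ofReal_coe_nnreal,
          ENNReal.mul_div_cancel (ENNReal.coe_ne_zero.2 hl) ENNReal.coe_ne_top]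

section Kernel

variable {n : ℕ} {α B L : ℝ} {Ω : Eucl n → ℝ}

lemma Homog.apply_inv_norm_smul (hhom : Homog n Ω) {z : Eucl n} (hz : z ≠ 0) :
    Ω (‖z‖⁻¹ • z) = Ω z := by
  have hz' : 0 < ‖z‖ := norm_pos_iff.2 hz
  rw [← hhom ‖z‖ hz' _ (smul_ne_zero (inv_ne_zero hz'.ne') hz), smul_smul,
    mul_inv_cancel₀ hz'.ne', one_smul]

lemma inv_norm_smul_mem_sphere {z : Eucl n} (hz : z ≠ 0) : ‖z‖⁻¹ • z ∈ sphere (0 : Eucl n) 1 := by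
  rw [mem_sphere_zero_iff_norm, norm_smul, norm_inv, norm_norm,
    inv_mul_cancel₀ (norm_ne_zero_iff.2 hz)]

lemma Homog.abs_le (hhom : Homog n Ω) (hB : ∀ u ∈ sphere (0 : Eucl n) 1, |Ω u| ≤ B)
    {z : Eucl n} (hz : z ≠ 0) : |Ω z| ≤ B := by
  rw [← hhom.apply_inv_norm_smul hz]
  exact hB _ (inv_norm_smul_mem_sphere hz)

lemma Homog.abs_sub_le (hhom : Homog n Ω)
    (hL : ∀ u ∈ sphere (0 : Eucl n) 1, ∀ v ∈ sphere (0 : Eucl n) 1, |Ω u - Ω v| ≤ L * ‖u - v‖)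
    (hL0 : 0 ≤ L) {z z' : Eucl n} (hz : z ≠ 0) (hz' : z' ≠ 0) :
    |Ω z - Ω z'| ≤ 2 * L * ‖z - z'‖ / ‖z‖ := by
  rw [← hhom.apply_inv_norm_smul hz, ← hhom.apply_inv_norm_smul hz']
  calc _ ≤ L * ‖‖z‖⁻¹ • z - ‖z'‖⁻¹ • z'‖ :=
        hL _ (inv_norm_smul_mem_sphere hz) _ (inv_norm_smul_mem_sphere hz')
    _ ≤ L * (2 * ‖z - z'‖ / ‖z‖) := by gcongr; exact norm_inv_norm_smul_sub_le hz
    _ = 2 * L * ‖z - z'‖ / ‖z‖ := by ring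

def omegaKernel (n : ℕ) (α : ℝ) (Ω : Eucl n → ℝ) (z : Eucl n) : ℝ :=
  Ω z / ‖z‖ ^ ((n : ℝ) - α)

lemma omegaKernel_eq_mul_rpow (z : Eucl n) :
    omegaKernel n α Ω z = Ω z * ‖z‖ ^ (α - n) := by
  rw [omegaKernel, div_eq_mul_inv, ← Real.rpow_neg (norm_nonneg z), neg_sub]

lemma fracInt_eq_integral_omegaKernel (f : Eucl n → ℝ) (x : Eucl n) :
    fracInt n α Ω f x = ∫ y, omegaKernel n α Ω (x - y) * f y := rfl

lemma abs_omegaKernel_sub_le (hαn : α < n) (hhom : Homog n Ω)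
    (hB : ∀ u ∈ sphere (0 : Eucl n) 1, |Ω u| ≤ B)
    (hL : ∀ u ∈ sphere (0 : Eucl n) 1, ∀ v ∈ sphere (0 : Eucl n) 1, |Ω u - Ω v| ≤ L * ‖u - v‖)
    (hL0 : 0 ≤ L) {z w : Eucl n} (hz : z ≠ 0) (hw : 2 * ‖w‖ ≤ ‖z‖) :
    |omegaKernel n α Ω (z - w) - omegaKernel n α Ω z| ≤
      (B * (n - α) * 2 ^ ((n : ℝ) - α + 1) + 2 * L) * ‖w‖ * ‖z‖ ^ (α - n - 1) := by
  have hz0 : 0 < ‖z‖ := norm_pos_iff.2 hz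
  have hzw : ‖z‖ / 2 ≤ ‖z - w‖ := by linarith [norm_sub_norm_le z w]
  have hzw0 : z - w ≠ 0 := norm_pos_iff.1 (by linarith)
  have hB0 : 0 ≤ B := (abs_nonneg _).trans (hhom.abs_le hB hz)
  have hradial : |‖z - w‖ ^ (α - n) - ‖z‖ ^ (α - n)| ≤
      (n - α) * 2 ^ ((n : ℝ) - α + 1) * ‖w‖ * ‖z‖ ^ (α - n - 1) := by
    calc _ ≤ |α - n| * (‖z‖ / 2) ^ (α - n - 1) * |‖z - w‖ - ‖z‖| :=
          abs_rpow_sub_rpow_le (by linarith) (by positivity) hzw (by linarith)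
      _ ≤ |α - n| * (‖z‖ / 2) ^ (α - n - 1) * ‖w‖ := by
          gcongr
          simpa using abs_norm_sub_norm_le (z - w) z
      _ = (n - α) * 2 ^ ((n : ℝ) - α + 1) * ‖w‖ * ‖z‖ ^ (α - n - 1) := by
          rw [abs_of_neg (by linarith), Real.div_rpow hz0.le zero_le_two, div_eq_mul_inv,
            ← Real.rpow_neg zero_le_two, show -(α - n - 1) = (n : ℝ) - α + 1 by ring]
          ring
  have hangular : |Ω (z - w) - Ω z| * ‖z‖ ^ (α - n) ≤ 2 * L * ‖w‖ * ‖z‖ ^ (α - n - 1) := by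
    calc _ ≤ 2 * L * ‖z - (z - w)‖ / ‖z‖ * ‖z‖ ^ (α - n) := by
          rw [abs_sub_comm]
          gcongr
          exact hhom.abs_sub_le hL hL0 hz hzw0
      _ = 2 * L * ‖w‖ * ‖z‖ ^ (α - n - 1) := by
          rw [sub_sub_cancel z w, Real.rpow_sub_one hz0.ne']
          ring
  rw [omegaKernel_eq_mul_rpow, omegaKernel_eq_mul_rpow]
  calc _ = |Ω (z - w) * (‖z - w‖ ^ (α - n) - ‖z‖ ^ (α - n)) +
        (Ω (z - w) - Ω z) * ‖z‖ ^ (α - n)| := by ring_nf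
    _ ≤ B * ((n - α) * 2 ^ ((n : ℝ) - α + 1) * ‖w‖ * ‖z‖ ^ (α - n - 1)) +
        2 * L * ‖w‖ * ‖z‖ ^ (α - n - 1) := by
        refine (abs_add_le _ _).trans (add_le_add ?_ ?_)
        · rw [abs_mul]
          exact mul_le_mul (hhom.abs_le hB hzw0) hradial (abs_nonneg _) hB0
        · rwa [abs_mul, abs_of_pos (Real.rpow_pos_of_pos hz0 _)]
    _ = _ := by ring

end Kernel

section Dilation

variable {n : ℕ} {f : Eucl n → ℝ} {t : ℝ}

lemma dil_nonneg (hpos : ∀ y, 0 ≤ f y) (ht : 0 < t) (y : Eucl n) : 0 ≤ dil n t f y :=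
  mul_nonneg (inv_nonneg.2 (pow_pos ht n).le) (hpos _)

lemma integrable_dil (hf : Integrable f) (ht : 0 < t) : Integrable (dil n t f) :=
  (hf.comp_smul (inv_ne_zero ht.ne')).const_mul _

lemma integral_dil (ht : 0 < t) : ∫ y, dil n t f y = ∫ y, f y := by
  simp only [dil]
  rw [integral_const_mul, Measure.integral_comp_inv_smul_of_nonneg volume f ht.le,
    finrank_euclideanSpace_fin, smul_eq_mul, inv_mul_cancel_left₀ (pow_ne_zero n ht.ne')]

lemma support_dil_subset {R : ℝ} (hsupp : Function.support f ⊆ closedBall 0 R) (ht : 0 < t) :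
    Function.support (dil n t f) ⊆ closedBall 0 (t * R) := by
  intro y hy
  have hfy : t⁻¹ • y ∈ closedBall 0 R := hsupp (right_ne_zero_of_mul hy)
  rw [mem_closedBall_zero_iff, norm_smul, norm_inv, Real.norm_of_nonneg ht.le,
    inv_mul_le_iff₀ ht] at hfy
  rwa [mem_closedBall_zero_iff]

end Dilation

lemma abs_fracInt_dil_sub_omegaKernel_le {n : ℕ} {α B L : ℝ} {Ω : Eucl n → ℝ} (hαn : α < n)
    (hmeas : Measurable Ω) (hhom : Homog n Ω)
    (hB : ∀ u ∈ sphere (0 : Eucl n) 1, |Ω u| ≤ B)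
    (hL : ∀ u ∈ sphere (0 : Eucl n) 1, ∀ v ∈ sphere (0 : Eucl n) 1, |Ω u - Ω v| ≤ L * ‖u - v‖)
    (hL0 : 0 ≤ L) {f : Eucl n → ℝ} (hf : Integrable f) (hpos : ∀ y, 0 ≤ f y)
    (hsupp : Function.support f ⊆ closedBall (0 : Eucl n) 1) (hnorm : ∫ y, f y = 1)
    {ρ t : ℝ} (hρ : 0 < ρ) (ht : 0 < t) (htρ : 2 * t ≤ ρ) {x : Eucl n} (hx : ρ ≤ ‖x‖) :
    |fracInt n α Ω (dil n t f) x - omegaKernel n α Ω x| ≤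
      (B * (n - α) * 2 ^ ((n : ℝ) - α + 1) + 2 * L) / ρ * t * ‖x‖ ^ (α - n) := by
  have hx0 : 0 < ‖x‖ := hρ.trans_le hx
  have hB0 : 0 ≤ B := (abs_nonneg _).trans (hhom.abs_le hB (norm_pos_iff.1 hx0))
  have hKmeas : Measurable (omegaKernel n α Ω) :=
    hmeas.div (continuous_norm.rpow_const fun _ => Or.inr (sub_pos.2 hαn).le).measurable
  rw [fracInt_eq_integral_omegaKernel]
  refine abs_integral_mul_sub_le (integrable_dil hf ht) (dil_nonneg hpos ht)
    (by rw [integral_dil ht, hnorm]) (support_dil_subset hsupp ht)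
    (hKmeas.comp (measurable_const.sub measurable_id)).aestronglyMeasurable fun y hy => ?_
  rw [mem_closedBall_zero_iff, mul_one] at hy
  calc _ ≤ (B * (n - α) * 2 ^ ((n : ℝ) - α + 1) + 2 * L) * ‖y‖ * ‖x‖ ^ (α - n - 1) :=
        abs_omegaKernel_sub_le hαn hhom hB hL hL0 (norm_pos_iff.1 hx0) (by linarith)
    _ ≤ (B * (n - α) * 2 ^ ((n : ℝ) - α + 1) + 2 * L) * t * (‖x‖ ^ (α - n) / ρ) := by
        rw [Real.rpow_sub_one hx0.ne']
        gcongr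
    _ = _ := by ring

lemma tendsto_ofReal_mul_mul_const_nhdsGT_zero (C : ℝ) {a : ℝ≥0∞} (ha : a ≠ ⊤) :
    Tendsto (fun t : ℝ => ENNReal.ofReal (C * t) * a) (nhdsWithin 0 (Ioi 0)) (nhds 0) := by
  have hlin : Tendsto (fun t : ℝ => C * t) (nhdsWithin 0 (Ioi 0)) (nhds 0) := by
    simpa using (continuous_const_mul C).continuousWithinAt.tendsto (s := Ioi (0 : ℝ)) (x := 0)
  simpa using ENNReal.Tendsto.mul_const (ENNReal.tendsto_ofReal hlin) (Or.inr ha)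

lemma wnormSet_fracInt_dil_sub_omegaKernel_le {n : ℕ} [NeZero n] {α B L : ℝ}
    {Ω : Eucl n → ℝ} (hαn : α < n) (hmeas : Measurable Ω) (hhom : Homog n Ω)
    (hB : ∀ u ∈ sphere (0 : Eucl n) 1, |Ω u| ≤ B)
    (hL : ∀ u ∈ sphere (0 : Eucl n) 1, ∀ v ∈ sphere (0 : Eucl n) 1, |Ω u - Ω v| ≤ L * ‖u - v‖)
    (hL0 : 0 ≤ L) {f : Eucl n → ℝ} (hf : Integrable f) (hpos : ∀ y, 0 ≤ f y)
    (hsupp : Function.support f ⊆ closedBall (0 : Eucl n) 1) (hnorm : ∫ y, f y = 1)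
    {ρ t : ℝ} (hρ : 0 < ρ) (ht : 0 < t) (htρ : 2 * t ≤ ρ) :
    wnormSet volume ((n : ℝ) / ((n : ℝ) - α)) (ball (0 : Eucl n) ρ)ᶜ
        (fun x => (‖fracInt n α Ω (dil n t f) x - omegaKernel n α Ω x‖₊ : ℝ≥0∞)) ≤
      ENNReal.ofReal ((B * (n - α) * 2 ^ ((n : ℝ) - α + 1) + 2 * L) / ρ * t) *
        volume (ball (0 : Eucl n) 1) ^ (((n : ℝ) - α) / n) := by
  have hB0 : 0 ≤ B := by
    obtain ⟨u, hu⟩ := (NormedSpace.sphere_nonempty (x := (0 : Eucl n))).2 zero_le_one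
    exact (abs_nonneg _).trans (hB u hu)
  have hC : 0 ≤ (B * (n - α) * 2 ^ ((n : ℝ) - α + 1) + 2 * L) / ρ * t := by
    have := (sub_pos.2 hαn).le
    positivity
  have := wnormSet_le_of_le_mul_rpow_norm volume (A := (ball (0 : Eucl n) ρ)ᶜ)
    (g := fun x => (‖fracInt n α Ω (dil n t f) x - omegaKernel n α Ω x‖₊ : ℝ≥0∞))
    (by simpa using hαn) hC fun x hx => by
      rw [mem_compl_iff, mem_ball_zero_iff, not_lt] at hx
      rw [finrank_euclideanSpace_fin, ← enorm_eq_nnnorm, ← ofReal_norm, Real.norm_eq_abs]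
      exact ENNReal.ofReal_le_ofReal (abs_fracInt_dil_sub_omegaKernel_le hαn hmeas hhom hB hL
        hL0 hf hpos hsupp hnorm hρ ht htρ hx)
  rwa [finrank_euclideanSpace_fin] at this

theorem stmt9 (n : ℕ) (α : ℝ) (hα : 0 < α) (hαn : α < n)
    (Ω : Eucl n → ℝ) (B L : ℝ) (hmeas : Measurable Ω) (hhom : Homog n Ω)
    (hB : ∀ u ∈ sphere (0 : Eucl n) 1, |Ω u| ≤ B)
    (hL : ∀ u ∈ sphere (0 : Eucl n) 1, ∀ v ∈ sphere (0 : Eucl n) 1,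
      |Ω u - Ω v| ≤ L * ‖u - v‖)
    (f : Eucl n → ℝ) (hf : Integrable f) (hpos : ∀ y, 0 ≤ f y)
    (hsupp : Function.support f ⊆ closedBall (0 : Eucl n) 1)
    (hnorm : (∫ y, f y) = 1) :
    ∀ ρ > (0:ℝ),
      Tendsto (fun t : ℝ => wnormSet volume ((n:ℝ)/((n:ℝ)-α)) ((ball (0 : Eucl n) ρ)ᶜ)
          (fun x => (‖fracInt n α Ω (dil n t f) x - Ω x / ‖x‖ ^ ((n:ℝ) - α)‖₊ : ℝ≥0∞)))
        (nhdsWithin 0 (Ioi 0)) (nhds 0) := by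
  intro ρ hρ
  have : NeZero n := ⟨by rintro rfl; simp at hαn; linarith⟩
  have hL' : ∀ u ∈ sphere (0 : Eucl n) 1, ∀ v ∈ sphere (0 : Eucl n) 1,
      |Ω u - Ω v| ≤ max L 0 * ‖u - v‖ := fun u hu v hv =>
    (hL u hu v hv).trans (by gcongr; exact le_max_left L 0)
  have hvol : volume (ball (0 : Eucl n) 1) ^ (((n : ℝ) - α) / n) ≠ ⊤ :=
    ENNReal.rpow_ne_top_of_nonneg (div_nonneg (sub_pos.2 hαn).le n.cast_nonneg)
      measure_ball_lt_top.ne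
  refine tendsto_of_tendsto_of_tendsto_of_le_of_le' tendsto_const_nhds
    (tendsto_ofReal_mul_mul_const_nhdsGT_zero
      ((B * (n - α) * 2 ^ ((n : ℝ) - α + 1) + 2 * max L 0) / ρ) hvol)
    (Eventually.of_forall fun t => zero_le) ?_
  filter_upwards [Ioo_mem_nhdsGT (half_pos hρ)] with t ht
  exact wnormSet_fracInt_dil_sub_omegaKernel_le hαn hmeas hhom hB hL' (le_max_right L 0) hf hpos
    hsupp hnorm hρ ht.1 (by linarith [ht.2])
end
end

section
/- Let $0<\alpha<n$ and let $\Omega$ be homogeneous of degree zero, bounded and Lipschitz on $\mathbb{S}^{n-1}$. Suppose $T_{\Omega}^{\alpha}$ is bounded from $L^1(\mathbb{R}^n)$ to $L^{n/(n-\alpha),\infty}(\mathbb{R}^n)$ with norm $A$. Then $\|\Omega\|_{L^{n/(n-\alpha)}(\mathbb{S}^{n-1})}\le C(n,\alpha)\,A$. -/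
open MeasureTheory Metric Set ENNReal Filter

noncomputable section

/-!
Test the weak-type inequality on `f = 1_{B(0,ε)}`, for which `‖f‖₁ = |B(0,ε)|`. Write
`k(z) = Ω(z)|z|^{α-n}`. Lipschitz continuity of `Ω` on the sphere gives
`|k(x-y) - k(x)| ≤ Kδ|x|^{α-n}` whenever `|y| ≤ δ|x|`, so
`|Tf(x)| ≥ |B(0,ε)| (|Ω(x)| - Kδ)|x|^{α-n}` for `|x| ≥ ε/δ`. At height `|B(0,ε)|` the weak-type
bound then controls the set where `(|Ω(x)| - Kδ)|x|^{α-n} > 1`, outside a ball of radius `ε/δ`,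
by `A^q` with `q = n/(n-α)`. In polar coordinates that set has measure
`(1/n) ∫_{S^{n-1}} (|Ω| - Kδ)₊^q`. Letting `δ → 0` and `ε/δ → 0` together, Fatou's lemma gives
`‖Ω‖_q^q ≤ n A^q`.
-/

open Topology

lemma norm_inv_smul_sub_inv_smul_le {E : Type*} [NormedAddCommGroup E] [NormedSpace ℝ E]
    {a b : E} (ha : a ≠ 0) (hb : b ≠ 0) :
    ‖‖a‖⁻¹ • a - ‖b‖⁻¹ • b‖ ≤ 2 * ‖a - b‖ / ‖a‖ := by
  have hb' : ‖b‖ ≠ 0 := norm_ne_zero_iff.2 hb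
  have hsplit : ‖a‖⁻¹ • a - ‖b‖⁻¹ • b = ‖a‖⁻¹ • ((a - b) + (‖b‖ - ‖a‖) • (‖b‖⁻¹ • b)) := by
    have ha' : ‖a‖ ≠ 0 := norm_ne_zero_iff.2 ha
    rw [smul_add, smul_smul, smul_smul]
    match_scalars
    · field_simp
    · field_simp
      ring
  have hunit : ‖(‖b‖ - ‖a‖) • (‖b‖⁻¹ • b)‖ ≤ ‖a - b‖ := by
    rw [norm_smul, norm_smul, norm_inv, norm_norm, inv_mul_cancel₀ hb', mul_one,
      Real.norm_eq_abs, norm_sub_rev]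
    exact abs_norm_sub_norm_le b a
  rw [hsplit, norm_smul, norm_inv, norm_norm, inv_mul_eq_div]
  gcongr
  linarith [norm_add_le (a - b) ((‖b‖ - ‖a‖) • (‖b‖⁻¹ • b))]

lemma abs_rpow_sub_rpow_le_s10 {β s t : ℝ} (hβ : β ≤ 1) (ht : 0 < t) (hst : |s - t| ≤ t / 2) :
    |s ^ β - t ^ β| ≤ |β| * (t / 2) ^ (β - 1) * |s - t| := by
  have hderiv : ∀ w ∈ Icc (t / 2) (3 * t / 2),
      HasDerivWithinAt (· ^ β) (β * w ^ (β - 1)) (Icc (t / 2) (3 * t / 2)) w := fun w hw =>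
    (Real.hasDerivAt_rpow_const (Or.inl (by linarith [hw.1]))).hasDerivWithinAt
  have hbound : ∀ w ∈ Icc (t / 2) (3 * t / 2), ‖β * w ^ (β - 1)‖ ≤ |β| * (t / 2) ^ (β - 1) := by
    intro w hw
    have hw0 : 0 < w := by linarith [hw.1]
    rw [Real.norm_eq_abs, abs_mul, abs_of_pos (Real.rpow_pos_of_pos hw0 _)]
    exact mul_le_mul_of_nonneg_left
      (Real.rpow_le_rpow_of_nonpos (by positivity) hw.1 (by linarith)) (abs_nonneg β)
  have hs : s ∈ Icc (t / 2) (3 * t / 2) := by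
    constructor <;> linarith [abs_sub_le_iff.1 hst]
  simpa [Real.norm_eq_abs] using (convex_Icc _ _).norm_image_sub_le_of_norm_hasDerivWithin_le
    hderiv hbound ⟨by linarith, by linarith⟩ hs

lemma nonneg_of_abs_sub_le_mul_norm_on_sphere {E : Type*} [NormedAddCommGroup E]
    [NormedSpace ℝ E] {φ : E → ℝ} {L : ℝ}
    (hL : ∀ u ∈ sphere (0 : E) 1, ∀ v ∈ sphere (0 : E) 1, |φ u - φ v| ≤ L * ‖u - v‖)
    {u : E} (hu : u ∈ sphere (0 : E) 1) : 0 ≤ L := by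
  have hu' : ‖u‖ = 1 := mem_sphere_zero_iff_norm.1 hu
  have h := hL u hu (-u) (by rwa [mem_sphere_zero_iff_norm, norm_neg])
  rw [sub_neg_eq_add, ← two_smul ℝ u, norm_smul, hu'] at h
  norm_num at h
  linarith [abs_nonneg (φ u - φ (-u))]

lemma Homog.comp {n : ℕ} {Ω : Eucl n → ℝ} (h : Homog n Ω) (g : ℝ → ℝ) :
    Homog n (fun x => g (Ω x)) :=
  fun r hr x hx => congrArg g (h r hr x hx)

def fracKernel (n : ℕ) (α : ℝ) (Ω : Eucl n → ℝ) (z : Eucl n) : ℝ :=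
  Ω z * ‖z‖ ^ (α - n)

lemma Measurable.fracKernel {n : ℕ} {α : ℝ} {Ω : Eucl n → ℝ} (hΩ : Measurable Ω) :
    Measurable (fracKernel n α Ω) :=
  hΩ.mul (measurable_norm.pow_const _)

lemma abs_fracKernel {n : ℕ} (α : ℝ) (Ω : Eucl n → ℝ) (z : Eucl n) :
    |fracKernel n α Ω z| = |Ω z| * ‖z‖ ^ (α - n) := by
  rw [fracKernel, abs_mul, abs_of_nonneg (Real.rpow_nonneg (norm_nonneg z) _)]

lemma fracInt_eq_integral_fracKernel (n : ℕ) (α : ℝ) (Ω f : Eucl n → ℝ) (x : Eucl n) :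
    fracInt n α Ω f x = ∫ y, fracKernel n α Ω (x - y) * f y := by
  simp only [fracInt, fracKernel, div_eq_mul_inv,
    ← Real.rpow_neg (norm_nonneg _), neg_sub]

lemma abs_fracKernel_sub_le {n : ℕ} {α B L δ : ℝ} {Ω : Eucl n → ℝ} (hαn : α ≤ n)
    (hhom : Homog n Ω) (hB : ∀ u ∈ sphere (0 : Eucl n) 1, |Ω u| ≤ B)
    (hL : ∀ u ∈ sphere (0 : Eucl n) 1, ∀ v ∈ sphere (0 : Eucl n) 1, |Ω u - Ω v| ≤ L * ‖u - v‖)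
    (hδ : δ ≤ 1 / 2) {x y : Eucl n} (hx : x ≠ 0) (hy : ‖y‖ ≤ δ * ‖x‖) :
    |fracKernel n α Ω (x - y) - fracKernel n α Ω x| ≤
      2 ^ (n - α) * (4 * L + 2 * (n - α) * B) * δ * ‖x‖ ^ (α - n) := by
  unfold fracKernel
  set β : ℝ := α - n
  set t := ‖x‖
  set s := ‖x - y‖
  have ht : 0 < t := norm_pos_iff.2 hx
  have hδ0 : 0 ≤ δ := nonneg_of_mul_nonneg_left ((norm_nonneg y).trans hy) ht
  have hyt : ‖y‖ ≤ t / 2 := hy.trans (by nlinarith)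
  have hst : |s - t| ≤ ‖y‖ := by simpa using abs_norm_sub_norm_le (x - y) x
  have hs : t / 2 ≤ s := by linarith [abs_sub_le_iff.1 hst]
  have hs0 : 0 < s := by linarith
  have hxy : x - y ≠ 0 := norm_pos_iff.1 hs0
  have unit : ∀ z : Eucl n, z ≠ 0 → ‖z‖⁻¹ • z ∈ sphere (0 : Eucl n) 1 := fun z hz => by
    simp [norm_smul, hz]
  have hL0 : 0 ≤ L := nonneg_of_abs_sub_le_mul_norm_on_sphere hL (unit x hx)
  have hΩx : |Ω x| ≤ B := hhom _ (inv_pos.2 ht) x hx ▸ hB _ (unit x hx)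
  have hB0 : 0 ≤ B := (abs_nonneg _).trans hΩx
  have hΩ : |Ω (x - y) - Ω x| ≤ L * (4 * δ) := by
    have hdir : ‖s⁻¹ • (x - y) - t⁻¹ • x‖ ≤ 4 * δ := by
      refine (norm_inv_smul_sub_inv_smul_le hxy hx).trans ?_
      rw [sub_sub_cancel_left, norm_neg, div_le_iff₀ hs0]
      nlinarith
    rw [← hhom _ (inv_pos.2 hs0) _ hxy, ← hhom _ (inv_pos.2 ht) _ hx]
    exact (hL _ (unit _ hxy) _ (unit x hx)).trans (mul_le_mul_of_nonneg_left hdir hL0)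
  have hsβ : s ^ β ≤ (t / 2) ^ β := Real.rpow_le_rpow_of_nonpos (half_pos ht) hs (by linarith)
  have hrpow : |s ^ β - t ^ β| ≤ 2 * (n - α) * δ * (t / 2) ^ β :=
    calc |s ^ β - t ^ β| ≤ |β| * (t / 2) ^ (β - 1) * |s - t| :=
          abs_rpow_sub_rpow_le_s10 (by linarith) ht (hst.trans hyt)
      _ ≤ (n - α) * (t / 2) ^ (β - 1) * (δ * t) := by
          rw [abs_of_nonpos (by linarith)]
          gcongr
          · linarith
          · exact hst.trans hy
      _ = 2 * (n - α) * δ * (t / 2) ^ β := by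
          rw [Real.rpow_sub_one (half_pos ht).ne']
          field_simp
  have htwo : (t / 2) ^ β = 2 ^ (n - α) * t ^ β := by
    rw [Real.div_rpow ht.le zero_le_two, show (n : ℝ) - α = -β by ring,
      Real.rpow_neg zero_le_two, div_eq_mul_inv, mul_comm]
  calc |Ω (x - y) * s ^ β - Ω x * t ^ β|
      = |(Ω (x - y) - Ω x) * s ^ β + Ω x * (s ^ β - t ^ β)| := by ring_nf
    _ ≤ |Ω (x - y) - Ω x| * s ^ β + |Ω x| * |s ^ β - t ^ β| :=
        (abs_add_le _ _).trans_eq <| by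
          rw [abs_mul, abs_mul, abs_of_pos (Real.rpow_pos_of_pos hs0 β)]
    _ ≤ L * (4 * δ) * (t / 2) ^ β + B * (2 * (n - α) * δ * (t / 2) ^ β) := by
        gcongr
    _ = 2 ^ (n - α) * (4 * L + 2 * (n - α) * B) * δ * t ^ β := by
        rw [htwo]
        ring

lemma measureReal_mul_sub_le_abs_fracInt_indicator {n : ℕ} {α : ℝ} {Ω : Eucl n → ℝ}
    (hΩ : Measurable Ω) {s : Set (Eucl n)} (hs : MeasurableSet s) (hsfin : volume s ≠ ⊤)
    {x : Eucl n} {η : ℝ}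
    (hreg : ∀ y ∈ s, |fracKernel n α Ω (x - y) - fracKernel n α Ω x| ≤ η) :
    volume.real s * (|fracKernel n α Ω x| - η) ≤
      |fracInt n α Ω (s.indicator fun _ => (1 : ℝ)) x| := by
  set k := fracKernel n α Ω
  have hT : fracInt n α Ω (s.indicator fun _ => (1 : ℝ)) x = ∫ y in s, k (x - y) := by
    rw [fracInt_eq_integral_fracKernel, ← integral_indicator hs]
    congr 1
    ext y
    by_cases hy : y ∈ s <;> simp [hy, k]
  have hint : IntegrableOn (fun y => k (x - y) - k x) s :=
    Integrable.mono' (integrableOn_const hsfin)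
      ((hΩ.fracKernel.comp (measurable_const.sub measurable_id)).sub
        measurable_const).aestronglyMeasurable
      ((ae_restrict_iff' hs).2 (ae_of_all _ hreg))
  have hsplit : ∫ y in s, k (x - y) = (∫ y in s, (k (x - y) - k x)) + volume.real s * k x := by
    rw [← smul_eq_mul, ← setIntegral_const, ← integral_add hint (integrableOn_const hsfin)]
    simp
  have herr : |∫ y in s, (k (x - y) - k x)| ≤ η * volume.real s :=
    norm_setIntegral_le_of_norm_le_const_ae' (f := fun y => k (x - y) - k x) hsfin.lt_top
      (ae_of_all _ hreg)
  have hV : |volume.real s * k x| = volume.real s * |k x| :=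
    by rw [abs_mul, abs_of_nonneg measureReal_nonneg]
  have htri := abs_sub_abs_le_abs_sub (volume.real s * k x) (-∫ y in s, (k (x - y) - k x))
  rw [abs_neg, sub_neg_eq_add, add_comm] at htri
  rw [hT, hsplit]
  linarith

lemma measure_le_rpow_of_wnormSet_le {X : Type*} [MeasurableSpace X] {μ : Measure X} {q : ℝ}
    (hq : 0 < q) {s S : Set X} {g : X → ℝ≥0∞} {A l : ℝ≥0∞} (hl0 : l ≠ 0) (hltop : l ≠ ⊤)
    (hw : wnormSet μ q s g ≤ A * l) (hS : S ⊆ {x | x ∈ s ∧ l < g x}) :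
    μ S ≤ A ^ q := by
  have hlevel : l * μ S ^ (1 / q) ≤ l * A :=
    calc l * μ S ^ (1 / q)
        ≤ (l.toNNReal : ℝ≥0∞) * μ {x | x ∈ s ∧ (l.toNNReal : ℝ≥0∞) < g x} ^ (1 / q) := by
          rw [ENNReal.coe_toNNReal hltop]
          gcongr
      _ ≤ wnormSet μ q s g :=
          le_iSup (fun c : NNReal => (c : ℝ≥0∞) * μ {x | x ∈ s ∧ (c : ℝ≥0∞) < g x} ^ (1 / q))
            l.toNNReal
      _ ≤ l * A := hw.trans_eq (mul_comm A l)
  rw [← ENNReal.rpow_inv_le_iff hq, ← one_div]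
  exact (ENNReal.mul_le_mul_iff_right hl0 hltop).1 hlevel

lemma volume_superlevel_fracKernel_le {n : ℕ} {α q : ℝ} (hq : 0 < q) {Ω : Eucl n → ℝ}
    (hΩ : Measurable Ω) {A : ℝ≥0∞}
    (hw : ∀ f : Eucl n → ℝ, Integrable f →
      wnormSet volume q univ (fun x => (‖fracInt n α Ω f x‖₊ : ℝ≥0∞)) ≤ A * eLpNorm f 1 volume)
    {a δ r : ℝ} (hδ : 0 < δ) (hr : 0 < r)
    (hreg : ∀ x y : Eucl n, x ≠ 0 → ‖y‖ ≤ δ * ‖x‖ →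
      |fracKernel n α Ω (x - y) - fracKernel n α Ω x| ≤ a * ‖x‖ ^ (α - n)) :
    volume {x | x ≠ 0 ∧ 1 < fracKernel n α (fun z => |Ω z| - a) x} ≤
      A ^ q + volume (ball (0 : Eucl n) r) := by
  set E := {x | x ≠ 0 ∧ 1 < fracKernel n α (fun z => |Ω z| - a) x}
  set s := ball (0 : Eucl n) (r * δ)
  have hs0 : volume s ≠ 0 := (measure_ball_pos volume 0 (mul_pos hr hδ)).ne'
  have hstop : volume s ≠ ⊤ := measure_ball_lt_top.ne
  have hf : Integrable (s.indicator fun _ => (1 : ℝ)) :=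
    (integrableOn_const hstop).integrable_indicator measurableSet_ball
  have hfnorm : eLpNorm (s.indicator fun _ => (1 : ℝ)) 1 volume = volume s := by
    rw [eLpNorm_indicator_const measurableSet_ball one_ne_zero ENNReal.one_ne_top]
    simp [s]
  have hfar : volume (E \ ball 0 r) ≤ A ^ q := by
    refine measure_le_rpow_of_wnormSet_le hq hs0 hstop (hfnorm ▸ hw _ hf) ?_
    rintro x ⟨⟨hx0, hx1⟩, hxr⟩
    refine ⟨mem_univ x, ?_⟩
    have hxr' : r ≤ ‖x‖ := by simpa using hxr
    have hlow := measureReal_mul_sub_le_abs_fracInt_indicator hΩ measurableSet_ball hstop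
      (fun y hy => hreg x y hx0 ((mem_ball_zero_iff.1 hy).le.trans (by nlinarith)))
    rw [abs_fracKernel, ← sub_mul] at hlow
    have hlt : volume.real s < |fracInt n α Ω (s.indicator fun _ => (1 : ℝ)) x| :=
      (lt_mul_of_one_lt_right (ENNReal.toReal_pos hs0 hstop) hx1).trans_le hlow
    rw [← enorm_eq_nnnorm, Real.enorm_eq_ofReal_abs, ← ENNReal.ofReal_toReal hstop]
    exact (ENNReal.ofReal_lt_ofReal_iff (measureReal_nonneg.trans_lt hlt)).2 hlt
  calc volume E ≤ volume (E \ ball 0 r ∪ ball 0 r) := measure_mono (subset_sdiff_union _ _)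
    _ ≤ volume (E \ ball 0 r) + volume (ball (0 : Eucl n) r) := measure_union_le _ _
    _ ≤ A ^ q + volume (ball (0 : Eucl n) r) := by gcongr

lemma volumeIoiPow_setOf_one_lt_mul_rpow {n : ℕ} (hn : 0 < n) {α : ℝ} (hαn : α < n) (c : ℝ) :
    Measure.volumeIoiPow (n - 1) {r : Ioi (0 : ℝ) | 1 < c * (r : ℝ) ^ (α - n)} =
      ENNReal.ofReal (max c 0 ^ ((n : ℝ) / (n - α)) / n) := by
  have hna : 0 < (n : ℝ) - α := sub_pos.2 hαn
  rcases le_or_gt c 0 with hc | hc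
  · have hempty : {r : Ioi (0 : ℝ) | 1 < c * (r : ℝ) ^ (α - n)} = ∅ := by
      ext r
      have := mul_nonpos_of_nonpos_of_nonneg hc (Real.rpow_nonneg r.2.le (α - n))
      simp only [mem_ofPred_eq, mem_empty_iff_false, iff_false, not_lt]
      linarith
    rw [hempty, measure_empty, max_eq_right hc,
      Real.zero_rpow (div_pos (by exact_mod_cast hn) hna).ne', zero_div, ENNReal.ofReal_zero]
  · set R : ℝ := c ^ ((n : ℝ) - α)⁻¹
    have hR : 0 < R := Real.rpow_pos_of_pos hc _
    have hRpow : R ^ (α - n) = c⁻¹ := by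
      rw [← Real.rpow_mul hc.le, show ((n : ℝ) - α)⁻¹ * (α - n) = -1 by field_simp; ring,
        Real.rpow_neg_one]
    have hIio : {r : Ioi (0 : ℝ) | 1 < c * (r : ℝ) ^ (α - n)} = Iio ⟨R, hR⟩ := by
      ext r
      rw [mem_ofPred_eq, mem_Iio, ← Subtype.coe_lt_coe, ← div_lt_iff₀' hc, one_div, ← hRpow]
      exact Real.rpow_lt_rpow_iff_of_neg hR r.2 (by linarith)
    rw [hIio, Measure.volumeIoiPow_apply_Iio, Nat.sub_add_cancel hn, Nat.cast_sub hn,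
      max_eq_left hc.le, Nat.cast_one, sub_add_cancel, ← Real.rpow_natCast, ← Real.rpow_mul hc.le,
      inv_mul_eq_div]

lemma lintegral_toSphere_eq_mul_volume_superlevel {n : ℕ} (hn : 0 < n) {α : ℝ} (hαn : α < n)
    {Ω : Eucl n → ℝ} (hΩ : Measurable Ω) (hhom : Homog n Ω) :
    ∫⁻ θ : sphere (0 : Eucl n) 1, ENNReal.ofReal (max (Ω θ) 0 ^ ((n : ℝ) / (n - α)))
        ∂(volume : Measure (Eucl n)).toSphere =
      n * volume {x | x ≠ 0 ∧ 1 < fracKernel n α Ω x} := by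
  set E := {x : Eucl n | x ≠ 0 ∧ 1 < fracKernel n α Ω x}
  set T : Set (sphere (0 : Eucl n) 1 × Ioi (0 : ℝ)) :=
    {p | 1 < Ω p.1 * (p.2 : ℝ) ^ (α - n)}
  have hT : MeasurableSet T :=
    measurableSet_lt measurable_const ((hΩ.comp (measurable_subtype_coe.comp measurable_fst)).mul
      ((measurable_subtype_coe.comp measurable_snd).pow_const _))
  have hpolar := (volume : Measure (Eucl n)).measurePreserving_homeomorphUnitSphereProd
  rw [finrank_euclideanSpace_fin] at hpolar
  have hpre : ((↑) : ({0}ᶜ : Set (Eucl n)) → Eucl n) ⁻¹' E =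
      homeomorphUnitSphereProd (Eucl n) ⁻¹' T := by
    ext ⟨x, hx⟩
    have hx0 : x ≠ 0 := hx
    simp only [E, T, fracKernel, mem_preimage, mem_ofPred_eq,
      homeomorphUnitSphereProd_apply_fst_coe, homeomorphUnitSphereProd_apply_snd_coe,
      hhom ‖x‖⁻¹ (inv_pos.2 (norm_pos_iff.2 hx0)) x hx0]
    simp [hx0]
  have hE0 : E ⊆ ({0}ᶜ : Set (Eucl n)) := fun _ hx => hx.1
  have hE : volume E = ∫⁻ θ, ENNReal.ofReal (max (Ω θ) 0 ^ ((n : ℝ) / (n - α)) / n)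
      ∂(volume : Measure (Eucl n)).toSphere :=
    calc volume E = Measure.comap ((↑) : ({0}ᶜ : Set (Eucl n)) → Eucl n) volume
          (homeomorphUnitSphereProd (Eucl n) ⁻¹' T) := by
          rw [← hpre, comap_subtype_coe_apply (measurableSet_singleton _).compl,
            Subtype.image_preimage_coe, inter_eq_self_of_subset_right hE0]
      _ = ((volume : Measure (Eucl n)).toSphere.prod (Measure.volumeIoiPow (n - 1))) T :=
          hpolar.measure_preimage hT.nullMeasurableSet
      _ = _ := by
          rw [Measure.prod_apply hT]
          refine lintegral_congr fun θ => ?_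
          have hslice : Prod.mk θ ⁻¹' T = {r : Ioi (0 : ℝ) | 1 < Ω θ * (r : ℝ) ^ (α - n)} := rfl
          rw [hslice, volumeIoiPow_setOf_one_lt_mul_rpow hn hαn]
  have hn' : (n : ℝ≥0∞) ≠ ⊤ := ENNReal.natCast_ne_top n
  rw [hE, ← lintegral_const_mul' _ _ hn']
  refine lintegral_congr fun θ => ?_
  rw [← ENNReal.ofReal_natCast, ← ENNReal.ofReal_mul (Nat.cast_nonneg n),
    mul_div_cancel₀ _ (Nat.cast_ne_zero.2 hn.ne')]

lemma tendsto_measure_ball_nhdsGT_zero {X : Type*} [MetricSpace X] [ProperSpace X]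
    [MeasurableSpace X] [OpensMeasurableSpace X] (μ : Measure X) [NullSingletonClass μ]
    [IsFiniteMeasureOnCompacts μ] (x : X) :
    Tendsto (fun r => μ (ball x r)) (𝓝[>] 0) (𝓝 0) := by
  have h := tendsto_measure_biInter_gt (μ := μ) (s := ball x) (a := 0)
    (fun r _ => measurableSet_ball.nullMeasurableSet)
    (fun _ _ _ hij => ball_subset_ball hij) ⟨1, one_pos, measure_ball_lt_top.ne⟩
  rwa [biInter_gt_ball, closedBall_zero, measure_singleton] at h

lemma lintegral_ofReal_rpow_le_of_tendsto {X : Type*} [MeasurableSpace X] {μ : Measure X}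
    {φ : X → ℝ} (hφ : Measurable φ) (hφ0 : ∀ x, 0 ≤ φ x) {q : ℝ} (hq : 0 ≤ q)
    {ι : Type*} {l : Filter ι} [l.IsCountablyGenerated] [l.NeBot]
    {a : ι → ℝ} (ha : Tendsto a l (𝓝 0)) {c : ι → ℝ≥0∞} {C : ℝ≥0∞} (hc : Tendsto c l (𝓝 C))
    (h : ∀ᶠ i in l, ∫⁻ x, ENNReal.ofReal (max (φ x - a i) 0 ^ q) ∂μ ≤ c i) :
    ∫⁻ x, ENNReal.ofReal (φ x ^ q) ∂μ ≤ C := by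
  have hlim : ∀ x, Tendsto (fun i => ENNReal.ofReal (max (φ x - a i) 0 ^ q)) l
      (𝓝 (ENNReal.ofReal (φ x ^ q))) := by
    intro x
    have hmax : Tendsto (fun i => max (φ x - a i) 0) l (𝓝 (φ x)) := by
      have := ((tendsto_const_nhds (x := φ x)).sub ha).max (tendsto_const_nhds (x := (0 : ℝ)))
      rwa [sub_zero, max_eq_left (hφ0 x)] at this
    exact (ENNReal.continuous_ofReal.tendsto _).comp
      ((Real.continuousAt_rpow_const _ _ (Or.inr hq)).tendsto.comp hmax)
  calc ∫⁻ x, ENNReal.ofReal (φ x ^ q) ∂μ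
      = ∫⁻ x, liminf (fun i => ENNReal.ofReal (max (φ x - a i) 0 ^ q)) l ∂μ :=
        lintegral_congr fun x => (hlim x).liminf_eq.symm
    _ ≤ liminf (fun i => ∫⁻ x, ENNReal.ofReal (max (φ x - a i) 0 ^ q) ∂μ) l :=
        lintegral_liminf_le fun i => ENNReal.measurable_ofReal.comp
          (((hφ.sub_const _).max measurable_const).pow_const q)
    _ ≤ liminf c l := liminf_le_liminf h
    _ = C := hc.liminf_eq

lemma sphereLpPow_eq_lintegral_ofReal {n : ℕ} {q : ℝ} (hq : 0 ≤ q) (Ω : Eucl n → ℝ) :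
    sphereLpPow n q Ω = ∫⁻ θ : sphere (0 : Eucl n) 1, ENNReal.ofReal (|Ω θ| ^ q)
      ∂(volume : Measure (Eucl n)).toSphere :=
  lintegral_congr fun θ => by
    rw [← enorm_eq_nnnorm, Real.enorm_eq_ofReal_abs,
      ENNReal.ofReal_rpow_of_nonneg (abs_nonneg _) hq]

lemma sphereLpNorm_le_of_sphereLpPow_le {n : ℕ} {q : ℝ} (hq : 0 < q) {Ω : Eucl n → ℝ}
    {c A : ℝ≥0∞} (h : sphereLpPow n q Ω ≤ c * A ^ q) :
    sphereLpNorm n q Ω ≤ c ^ (1 / q) * A :=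
  calc sphereLpNorm n q Ω ≤ (c * A ^ q) ^ (1 / q) := by
        rw [sphereLpNorm]
        gcongr
    _ = c ^ (1 / q) * A := by
        rw [ENNReal.mul_rpow_of_nonneg _ _ (by positivity), ← ENNReal.rpow_mul,
          mul_one_div_cancel hq.ne', ENNReal.rpow_one]

theorem stmt10 (n : ℕ) (α : ℝ) (hα : 0 < α) (hαn : α < n) :
    ∃ C : ℝ≥0∞, 0 < C ∧ C < ⊤ ∧
      ∀ (Ω : Eucl n → ℝ) (A : ℝ≥0∞) (B L : ℝ), Measurable Ω → Homog n Ω →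
        (∀ u ∈ sphere (0 : Eucl n) 1, |Ω u| ≤ B) →
        (∀ u ∈ sphere (0 : Eucl n) 1, ∀ v ∈ sphere (0 : Eucl n) 1,
          |Ω u - Ω v| ≤ L * ‖u - v‖) →
        (∀ f : Eucl n → ℝ, Integrable f →
          wnormSet volume ((n:ℝ)/((n:ℝ)-α)) Set.univ
              (fun x => (‖fracInt n α Ω f x‖₊ : ℝ≥0∞)) ≤ A * eLpNorm f 1 volume) →
        sphereLpNorm n ((n:ℝ)/((n:ℝ)-α)) Ω ≤ C * A := by
  have hn : 0 < n := by exact_mod_cast hα.trans hαn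
  set q : ℝ := n / (n - α)
  have hq : 0 < q := div_pos (by exact_mod_cast hn) (sub_pos.2 hαn)
  refine ⟨n ^ (1 / q), ENNReal.rpow_pos (by exact_mod_cast hn) (ENNReal.natCast_ne_top n),
    ENNReal.rpow_lt_top_of_nonneg (by positivity) (ENNReal.natCast_ne_top n), ?_⟩
  intro Ω A B L hΩ hhom hB hL hw
  -- makes `Eucl n` nontrivial, so that `volume` has no atoms
  have : Nonempty (Fin n) := ⟨⟨0, hn⟩⟩
  set K := 2 ^ (n - α) * (4 * L + 2 * (n - α) * B)
  have hlevel : ∀ δ ∈ Ioc (0 : ℝ) (1 / 2), ∫⁻ θ : sphere (0 : Eucl n) 1,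
      ENNReal.ofReal (max (|Ω θ| - K * δ) 0 ^ q) ∂(volume : Measure (Eucl n)).toSphere ≤
        n * (A ^ q + volume (ball (0 : Eucl n) δ)) := fun δ hδ =>
    (lintegral_toSphere_eq_mul_volume_superlevel hn hαn (hΩ.abs.sub_const _)
      (hhom.comp fun t => |t| - K * δ)).trans_le <| by
        gcongr
        exact volume_superlevel_fracKernel_le hq hΩ hw hδ.1 hδ.1 fun x y hx hy =>
          (abs_fracKernel_sub_le hαn.le hhom hB hL hδ.2 hx hy).trans_eq (by ring)
  have hball : Tendsto (fun δ => n * (A ^ q + volume (ball (0 : Eucl n) δ))) (𝓝[>] 0)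
      (𝓝 (n * A ^ q)) := by
    simpa using ENNReal.Tendsto.const_mul
      ((tendsto_measure_ball_nhdsGT_zero volume (0 : Eucl n)).const_add (A ^ q))
      (Or.inr (ENNReal.natCast_ne_top n))
  have hKδ : Tendsto (fun δ : ℝ => K * δ) (𝓝[>] 0) (𝓝 0) :=
    ((continuous_const_mul K).tendsto' 0 0 (mul_zero K)).mono_left nhdsWithin_le_nhds
  refine sphereLpNorm_le_of_sphereLpPow_le hq ?_
  rw [sphereLpPow_eq_lintegral_ofReal hq.le]
  exact lintegral_ofReal_rpow_le_of_tendsto (hΩ.comp measurable_subtype_coe).abs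
    (fun θ => abs_nonneg _) hq.le hKδ hball
    (eventually_of_mem (Ioc_mem_nhdsGT (by norm_num)) hlevel)
end
end
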